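/- Let 0 < α_min ≤ α_max < 2. There exists a constant c > 0 depending only on α_min and α_max with the following property. Let N ≥ 2 be an integer, h = 1/N, let α_1, …, α_{N−1} ∈ [α_min, α_max] and b_1, …, b_{N−1} ≥ 0, and let A be the (N−1) × (N−1) real matrix with entries A_{jk} = h^{−α_j} a_{k−j}^{(α_j)} + b_j δ_{jk} (δ the Kronecker delta). Then A is invertible, and for every f ∈ ℝ^{N−1} the unique solution u of A u = f satisfies max_j |u_j| ≤ c max_j |f_j|. -/

import Mathlib

open MeasureTheory Real Matrix

noncomputable section

/-- The finite difference weight `a_n^{(α)} = (1/(2π)) ∫_{-π}^{π} e^{-inη} (4 sin²(η/2))^{α/2} dη`. -/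
def aWeightC (α : ℝ) (n : ℤ) : ℂ :=
  (1 / (2 * Real.pi)) • ∫ η in (-Real.pi)..Real.pi,
    Complex.exp (-Complex.I * (n : ℂ) * (η : ℂ)) *
      (((4 * Real.sin (η / 2) ^ 2) ^ (α / 2) : ℝ) : ℂ)

/-- The weight `a_n^{(α)}` as a real number (the integral is real-valued). -/
def aWeightR (α : ℝ) (n : ℤ) : ℝ := (aWeightC α n).re

/-!
Write the symbol as `(2 - 2 cos η)^(α/2)`. Integrating the derivative of
`cos (nη) · sin η · (2 - 2 cos η)^(α/2)` over `[-π, π]` yields the recurrence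
`(n + 1 + α/2) a_{n+1} = (n - α/2) a_n` for all `n ∈ ℤ`. Since `a_0 ≥ 1/2`, it follows that
`a_n < 0` for `n ≠ 0`, and Bernoulli's inequality gives `-a_n ≳ α n^{-1-α}`. For
`φ(m) = (m + α/2) a_m` the recurrence reads `φ(m) - φ(m+1) = α a_m`, so a sum of weights over a
window telescopes. The row sums of `A` are therefore at least
`h^{-α_j} (j+1)^{-α_j} (1 - α_j/2)^3 / 8 ≥ (1 - α_max/2)^3 / 8`. The off-diagonal entries are
nonpositive, so the discrete maximum principle gives `‖u‖_∞ ≤ 8 (1 - α_max/2)^{-3} ‖A u‖_∞`,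
which also implies that `A` is invertible.
-/

lemma four_mul_sin_half_sq (η : ℝ) : 4 * sin (η / 2) ^ 2 = 2 - 2 * cos η := by
  have h := cos_two_mul_eq_one_sub (η / 2)
  rw [mul_div_cancel₀ η two_ne_zero] at h
  linarith

lemma rpow_mul_add_le_mul_add_one_rpow {x p : ℝ} (hx : 0 < x) (hp : 1 ≤ p) :
    x ^ p * (x + p) ≤ x * (x + 1) ^ p := by
  have hBernoulli : 1 + p * x⁻¹ ≤ (1 + x⁻¹) ^ p :=
    one_add_mul_self_le_rpow_one_add (by linarith [inv_pos.2 hx]) hp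
  calc x ^ p * (x + p) = x * (x ^ p * (1 + p * x⁻¹)) := by field_simp
    _ ≤ x * (x ^ p * (1 + x⁻¹) ^ p) := by gcongr
    _ = x * (x + 1) ^ p := by
      rw [← mul_rpow hx.le (by positivity), mul_add, mul_inv_cancel₀ hx.ne', mul_one]

lemma one_div_natCast_rpow_neg (N : ℕ) (α : ℝ) : ((1 : ℝ) / N) ^ (-α) = (N : ℝ) ^ α := by
  rw [one_div, inv_rpow (Nat.cast_nonneg N), rpow_neg (Nat.cast_nonneg N), inv_inv]

def fracSymbol (α η : ℝ) : ℝ := (2 - 2 * cos η) ^ (α / 2)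

section Weights

variable {α : ℝ}

lemma continuous_fracSymbol (hα : 0 ≤ α) : Continuous (fracSymbol α) :=
  (continuous_const.sub (continuous_const.mul continuous_cos)).rpow_const
    fun _ => Or.inr (by linarith)

lemma intervalIntegrable_cos_mul_fracSymbol (hα : 0 ≤ α) (m a b : ℝ) :
    IntervalIntegrable (fun η => cos (m * η) * fracSymbol α η) volume a b :=
  ((continuous_cos.comp (continuous_const.mul continuous_id)).mul
    (continuous_fracSymbol hα)).intervalIntegrable a b

lemma aWeightR_eq_integral (hα : 0 ≤ α) (n : ℤ) :
    aWeightR α n = (2 * π)⁻¹ * ∫ η in -π..π, cos (n * η) * fracSymbol α η := by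
  set F : ℝ → ℂ := fun η => Complex.exp (-Complex.I * n * η) *
    (((4 * sin (η / 2) ^ 2) ^ (α / 2) : ℝ) : ℂ)
  have hFint : IntervalIntegrable F volume (-π) π := by
    refine (Continuous.intervalIntegrable ?_ _ _)
    simp only [F, four_mul_sin_half_sq]
    exact (by fun_prop : Continuous fun η : ℝ => Complex.exp (-Complex.I * n * η)).mul
      (Complex.continuous_ofReal.comp (continuous_fracSymbol hα))
  have hre : ∀ η : ℝ, (F η).re = cos (n * η) * fracSymbol α η := by
    intro η
    have : -Complex.I * n * η = ((-(n * η) : ℝ) : ℂ) * Complex.I := by push_cast; ring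
    simp only [F, four_mul_sin_half_sq, this, Complex.re_mul_ofReal, Complex.exp_ofReal_mul_I_re,
      cos_neg, fracSymbol]
  rw [aWeightR, aWeightC, Complex.smul_re, smul_eq_mul, one_div,
    ← Complex.reCLM_apply, ← Complex.reCLM.intervalIntegral_comp_comm hFint]
  simp only [Complex.reCLM_apply, hre]

lemma aWeightR_neg (hα : 0 ≤ α) (n : ℤ) : aWeightR α (-n) = aWeightR α n := by
  simp only [aWeightR_eq_integral hα, Int.cast_neg, neg_mul, cos_neg]

lemma hasDerivAt_sin_mul_fracSymbol {η : ℝ} (hη : cos η ≠ 1) :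
    HasDerivAt (fun η => sin η * fracSymbol α η)
      ((cos η + α / 2 * (1 + cos η)) * fracSymbol α η) η := by
  have hB : 2 - 2 * cos η ≠ 0 := fun h => hη (by linarith)
  have hg : HasDerivAt (fracSymbol α)
      (2 * sin η * (α / 2) * (2 - 2 * cos η) ^ (α / 2 - 1)) η := by
    have := ((hasDerivAt_cos η).const_mul 2).const_sub 2
    exact (this.congr_deriv (by ring)).rpow_const (Or.inl hB)
  refine ((hasDerivAt_sin η).mul hg).congr_deriv ?_
  rw [rpow_sub_one hB, ← fracSymbol]
  field_simp
  linear_combination (α * fracSymbol α η) * sin_sq_add_cos_sq η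

lemma aWeightR_three_term (hα : 0 < α) (n : ℤ) :
    (1 + α / 2 - n) * aWeightR α (n - 1) + (1 + α / 2 + n) * aWeightR α (n + 1)
      + α * aWeightR α n = 0 := by
  set I : ℝ → ℝ → ℝ := fun m η => cos (m * η) * fracSymbol α η
  have hI : ∀ m, IntervalIntegrable (I m) volume (-π) π :=
    fun m => intervalIntegrable_cos_mul_fracSymbol hα.le m _ _
  -- `{0}` is excluded: there the symbol need not be differentiable.
  have hderiv : ∀ η ∈ Set.Ioo (min (-π) π) (max (-π) π) \ {0}, HasDerivAt
      (fun η => 2 * (cos (n * η) * (sin η * fracSymbol α η)))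
      ((1 + α / 2 - n) * I ((n - 1 : ℤ) : ℝ) η + (1 + α / 2 + n) * I ((n + 1 : ℤ) : ℝ) η
        + α * I n η) η := by
    rintro η ⟨⟨hη₁, hη₂⟩, hη₀⟩
    have hπ := pi_pos
    rw [min_eq_left (by linarith), max_eq_right (by linarith)] at *
    have hcos : cos η ≠ 1 :=
      (cos_eq_one_iff_of_lt_of_lt (by linarith) (by linarith)).not.mpr hη₀
    refine ((((hasDerivAt_id η).const_mul (n : ℝ)).cos.mul
      (hasDerivAt_sin_mul_fracSymbol hcos)).const_mul 2).congr_deriv ?_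
    simp only [I, Int.cast_sub, Int.cast_add, Int.cast_one, sub_mul, add_mul, one_mul, cos_sub,
      cos_add, id]
    ring
  have hFTC := integral_eq_of_hasDerivAt_off_countable _ _ (Set.countable_singleton 0)
    (by have := continuous_fracSymbol hα.le; fun_prop) hderiv
    ((((hI _).const_mul _).add ((hI _).const_mul _)).add ((hI _).const_mul _))
  have hIntegral : ∀ m : ℤ, ∫ η in -π..π, I m η = 2 * π * aWeightR α m := fun m => by
    rw [aWeightR_eq_integral hα.le]
    field_simp
    rfl
  rw [intervalIntegral.integral_add (((hI _).const_mul _).add ((hI _).const_mul _))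
      ((hI _).const_mul _), intervalIntegral.integral_add ((hI _).const_mul _) ((hI _).const_mul _),
    intervalIntegral.integral_const_mul, intervalIntegral.integral_const_mul,
    intervalIntegral.integral_const_mul, hIntegral, hIntegral, hIntegral] at hFTC
  simp only [sin_pi, sin_neg, neg_zero, zero_mul, mul_zero, sub_zero] at hFTC
  have h2π : 2 * π ≠ 0 := by positivity
  refine (mul_eq_zero.1 ?_).resolve_left h2π
  linear_combination hFTC

lemma aWeightR_recurrence (hα : 0 < α) (n : ℤ) :
    (n + 1 + α / 2) * aWeightR α (n + 1) = (n - α / 2) * aWeightR α n := by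
  set r : ℤ → ℝ := fun n => (n + 1 + α / 2) * aWeightR α (n + 1) - (n - α / 2) * aWeightR α n
  have hstep : ∀ n, r n + r (n - 1) = 0 := fun n => by
    simp only [r, sub_add_cancel, Int.cast_sub, Int.cast_one]
    linear_combination aWeightR_three_term hα n
  have hzero : r 0 = 0 := by
    have hsymm : r (-1) = r 0 := by
      simp only [r, show (-1 + 1 : ℤ) = 0 by rfl, aWeightR_neg hα.le, Int.cast_neg, Int.cast_one,
        Int.cast_zero, zero_add]
      ring
    linarith [zero_sub (1 : ℤ) ▸ hstep 0]
  suffices r n = 0 from sub_eq_zero.1 this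
  induction n using Int.induction_on with
  | zero => exact hzero
  | succ i ih => linarith [add_sub_cancel_right (i : ℤ) 1 ▸ hstep (i + 1)]
  | pred i ih => linarith [hstep (-i)]

lemma one_sub_cos_div_two_le_fracSymbol (hα : 0 ≤ α) (hα2 : α ≤ 2) (η : ℝ) :
    (1 - cos η) / 2 ≤ fracSymbol α η := by
  have ht : 0 ≤ (1 - cos η) / 2 := by linarith [cos_le_one η]
  calc (1 - cos η) / 2 = ((1 - cos η) / 2) ^ (1 : ℝ) := (rpow_one _).symm
    _ ≤ ((1 - cos η) / 2) ^ (α / 2) :=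
      rpow_le_rpow_of_exponent_ge' ht (by linarith [neg_one_le_cos η]) (by positivity)
        (by linarith)
    _ ≤ fracSymbol α η := rpow_le_rpow ht (by linarith) (by positivity)

lemma one_half_le_aWeightR_zero (hα : 0 ≤ α) (hα2 : α ≤ 2) : 1 / 2 ≤ aWeightR α 0 := by
  have hmono : ∫ η in -π..π, (1 - cos η) / 2 ≤ ∫ η in -π..π, fracSymbol α η :=
    intervalIntegral.integral_mono_on (by linarith [pi_pos])
      ((by fun_prop : Continuous fun η => (1 - cos η) / 2).intervalIntegrable _ _)
      ((continuous_fracSymbol hα).intervalIntegrable _ _)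
      fun η _ => one_sub_cos_div_two_le_fracSymbol hα hα2 η
  have hπ : ∫ η in -π..π, (1 - cos η) / 2 = π := by
    simp [intervalIntegral.integral_div, integral_cos]
  rw [aWeightR_eq_integral hα]
  simp only [Int.cast_zero, zero_mul, cos_zero, one_mul]
  rw [hπ] at hmono
  calc 1 / 2 = (2 * π)⁻¹ * π := by field_simp
    _ ≤ _ := by gcongr

lemma aWeightR_lt_zero (hα : 0 < α) (hα2 : α < 2) {n : ℤ} (hn : n ≠ 0) :
    aWeightR α n < 0 := by
  have hnat : ∀ m : ℕ, aWeightR α (m + 1) < 0 := by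
    intro m
    induction m with
    | zero =>
      have h := aWeightR_recurrence hα 0
      have h0 := one_half_le_aWeightR_zero hα.le hα2.le
      simp only [Int.cast_zero, zero_add, zero_sub] at h
      norm_num
      nlinarith
    | succ m ih =>
      have h := aWeightR_recurrence hα (m + 1)
      push_cast at h ⊢
      refine neg_of_mul_neg_right (a := (m + 1 + 1 + α / 2 : ℝ)) ?_ (by positivity)
      rw [h]
      exact mul_neg_of_pos_of_neg (by linarith) ih
  obtain ⟨m, rfl | rfl⟩ : ∃ m : ℕ, n = m + 1 ∨ n = -(m + 1) := ⟨n.natAbs - 1, by omega⟩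
  · exact hnat m
  · rw [aWeightR_neg hα.le]; exact hnat m

lemma neg_aWeightR_mul_rpow_le_succ (hα : 0 < α) (hα2 : α < 2) (n : ℕ) :
    -aWeightR α (n + 1) * (n + 1 - α / 2) ^ (1 + α)
      ≤ -aWeightR α (n + 2) * (n + 2 - α / 2) ^ (1 + α) := by
  set x : ℝ := n + 1 - α / 2 with hx_def
  have hx : 0 < x := by linarith [n.cast_nonneg (α := ℝ)]
  have hrec : (x + (1 + α)) * -aWeightR α (n + 2) = x * -aWeightR α (n + 1) := by
    have h := aWeightR_recurrence hα (n + 1)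
    simp only [Int.cast_add, Int.cast_natCast, Int.cast_one, add_assoc] at h
    norm_num at h
    linear_combination -h
  have ha : 0 ≤ -aWeightR α (n + 1) :=
    neg_nonneg.2 (aWeightR_lt_zero hα hα2 (by omega)).le
  have hx2 : (n + 2 - α / 2 : ℝ) = x + 1 := by ring
  rw [hx2]
  refine le_of_mul_le_mul_right ?_ (by linarith : 0 < x + (1 + α))
  calc -aWeightR α (n + 1) * x ^ (1 + α) * (x + (1 + α))
      = -aWeightR α (n + 1) * (x ^ (1 + α) * (x + (1 + α))) := by ring
    _ ≤ -aWeightR α (n + 1) * (x * (x + 1) ^ (1 + α)) :=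
      mul_le_mul_of_nonneg_left (rpow_mul_add_le_mul_add_one_rpow hx (by linarith)) ha
    _ = -aWeightR α (n + 2) * (x + 1) ^ (1 + α) * (x + (1 + α)) := by
      linear_combination -(x + 1) ^ (1 + α) * hrec

lemma le_neg_aWeightR_mul_rpow (hα : 0 < α) (hα2 : α < 2) (n : ℕ) :
    α * ((1 - α / 2) ^ 3 / 8) ≤ -aWeightR α (n + 1) * (n + 1 - α / 2) ^ (1 + α) := by
  induction n with
  | zero =>
    have h := aWeightR_recurrence hα 0
    have h0 := one_half_le_aWeightR_zero hα.le hα2.le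
    norm_num at h
    simp only [Nat.cast_zero, zero_add]
    have ha1 : α / 8 ≤ -aWeightR α 1 := by nlinarith
    have hpos : 0 < 1 - α / 2 := by linarith
    have hpow : (1 - α / 2) ^ (3 : ℝ) ≤ (1 - α / 2) ^ (1 + α) :=
      rpow_le_rpow_of_exponent_ge (by linarith) (by linarith) (by linarith)
    rw [rpow_ofNat] at hpow
    calc α * ((1 - α / 2) ^ 3 / 8) = α / 8 * (1 - α / 2) ^ 3 := by ring
      _ ≤ -aWeightR α 1 * (1 - α / 2) ^ (1 + α) := by gcongr; linarith
  | succ n ih =>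
    refine ih.trans ?_
    have hℤ : ((n + 1 : ℕ) : ℤ) + 1 = n + 2 := by push_cast; ring
    have hℝ : ((n + 1 : ℕ) : ℝ) + 1 = n + 2 := by push_cast; ring
    rw [hℤ, hℝ]
    exact neg_aWeightR_mul_rpow_le_succ hα hα2 n

lemma mul_rpow_le_aWeightR_neg (hα : 0 < α) (hα2 : α < 2) (j : ℕ) :
    α * ((1 - α / 2) ^ 3 / 8) * ((j : ℝ) + 1) ^ (-α) ≤ (-j + α / 2) * aWeightR α (-j) := by
  rcases j with _ | n
  · have h0 := one_half_le_aWeightR_zero hα.le hα2.le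
    have hpow : (1 - α / 2) ^ 3 ≤ 1 := pow_le_one₀ (by linarith) (by linarith)
    simp only [CharP.cast_eq_zero, zero_add, one_rpow, mul_one, neg_zero]
    nlinarith
  · set x : ℝ := n + 1 - α / 2 with hx_def
    have hx : 0 < x := by linarith [n.cast_nonneg (α := ℝ)]
    have hxx : x ^ (1 + α) * x ^ (-α) = x := by
      rw [← rpow_add hx, add_neg_cancel_right, rpow_one]
    have hcoef : -((n + 1 : ℕ) : ℝ) + α / 2 = -x := by push_cast; ring
    rw [aWeightR_neg hα.le, hcoef]
    push_cast
    calc α * ((1 - α / 2) ^ 3 / 8) * ((n : ℝ) + 1 + 1) ^ (-α)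
        ≤ α * ((1 - α / 2) ^ 3 / 8) * x ^ (-α) :=
          mul_le_mul_of_nonneg_left (rpow_le_rpow_of_nonpos hx (by linarith) (by linarith))
            (by have : 0 < 1 - α / 2 := by linarith
                positivity)
      _ ≤ -aWeightR α (n + 1) * x ^ (1 + α) * x ^ (-α) :=
          mul_le_mul_of_nonneg_right (le_neg_aWeightR_mul_rpow hα hα2 n) (rpow_nonneg hx.le _)
      _ = -x * aWeightR α (n + 1) := by rw [mul_assoc, hxx]; ring

lemma mul_sum_aWeightR_sub (hα : 0 < α) (j M : ℕ) :
    α * ∑ k ∈ Finset.range M, aWeightR α (k - j)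
      = (-j + α / 2) * aWeightR α (-j) - (M - j + α / 2) * aWeightR α (M - j) := by
  have hstep : ∀ k : ℕ, α * aWeightR α (k - j) = ((k : ℝ) - j + α / 2) * aWeightR α (k - j)
      - (((k + 1 : ℕ) : ℝ) - j + α / 2) * aWeightR α ((k + 1 : ℕ) - j) := fun k => by
    have h := aWeightR_recurrence hα (k - j)
    rw [show ((k + 1 : ℕ) : ℤ) - j = k - j + 1 by push_cast; ring]
    push_cast at h ⊢
    linear_combination h
  rw [Finset.mul_sum, Finset.sum_congr rfl fun k _ => hstep k, Finset.sum_range_sub']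
  push_cast
  ring_nf

lemma rpow_mul_le_sum_aWeightR (hα : 0 < α) (hα2 : α < 2) {j M : ℕ} (hj : j < M) :
    (1 - α / 2) ^ 3 / 8 * ((j : ℝ) + 1) ^ (-α) ≤ ∑ k ∈ Finset.range M, aWeightR α (k - j) := by
  have hlast : 0 ≤ -((M - j + α / 2) * aWeightR α (M - j)) := by
    have hM : (j : ℝ) + 1 ≤ M := by exact_mod_cast hj
    have := aWeightR_lt_zero hα hα2 (n := M - j) (by omega)
    nlinarith
  refine le_of_mul_le_mul_left ?_ hα
  rw [mul_sum_aWeightR_sub hα, ← mul_assoc]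
  linarith [mul_rpow_le_aWeightR_neg hα hα2 j]

end Weights

section MaximumPrinciple

variable {ι : Type*} [Fintype ι] {A : Matrix ι ι ℝ} {c : ℝ}

lemma mul_le_mulVec_apply_of_le (hoff : ∀ j k, j ≠ k → A j k ≤ 0) {j : ι}
    (hrow : c ≤ ∑ k, A j k) {u : ι → ℝ} (hmax : ∀ k, u k ≤ u j) (hpos : 0 ≤ u j) :
    c * u j ≤ (A *ᵥ u) j :=
  calc c * u j ≤ (∑ k, A j k) * u j := mul_le_mul_of_nonneg_right hrow hpos
    _ = ∑ k, A j k * u j := Finset.sum_mul ..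
    _ ≤ ∑ k, A j k * u k := Finset.sum_le_sum fun k _ => by
      rcases eq_or_ne j k with rfl | hjk
      · exact le_rfl
      · exact mul_le_mul_of_nonpos_left (hmax k) (hoff j k hjk)
    _ = (A *ᵥ u) j := rfl

lemma mul_abs_le_of_abs_mulVec_le (hc : 0 ≤ c) (hoff : ∀ j k, j ≠ k → A j k ≤ 0)
    (hrow : ∀ j, c ≤ ∑ k, A j k) {u : ι → ℝ} {F : ℝ} (hF : ∀ k, |(A *ᵥ u) k| ≤ F) (j : ι) :
    c * |u j| ≤ F := by
  have : Nonempty ι := ⟨j⟩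
  obtain ⟨j₀, hj₀⟩ := Finite.exists_max fun k => |u k|
  calc c * |u j| ≤ c * |u j₀| := mul_le_mul_of_nonneg_left (hj₀ j) hc
    _ ≤ |(A *ᵥ u) j₀| := ?_
    _ ≤ F := hF j₀
  rcases le_total 0 (u j₀) with hpos | hneg
  · have hmax : ∀ k, u k ≤ u j₀ := fun k =>
      (le_abs_self _).trans ((hj₀ k).trans (abs_of_nonneg hpos).le)
    rw [abs_of_nonneg hpos]
    exact (mul_le_mulVec_apply_of_le hoff (hrow j₀) hmax hpos).trans (le_abs_self _)
  · have hmax : ∀ k, (-u) k ≤ (-u) j₀ := fun k =>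
      (neg_le_abs _).trans ((hj₀ k).trans (abs_of_nonpos hneg).le)
    have h := mul_le_mulVec_apply_of_le hoff (hrow j₀) hmax (neg_nonneg.2 hneg)
    rw [abs_of_nonpos hneg]
    rw [mulVec_neg, Pi.neg_apply] at h
    exact h.trans (neg_le_abs _)

lemma isUnit_of_offDiag_nonpos_of_rowSum [DecidableEq ι] (hc : 0 < c)
    (hoff : ∀ j k, j ≠ k → A j k ≤ 0) (hrow : ∀ j, c ≤ ∑ k, A j k) : IsUnit A := by
  refine mulVec_injective_iff_isUnit.1 fun u v huv => funext fun j => ?_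
  have hF : ∀ k, |(A *ᵥ (u - v)) k| ≤ 0 := fun k => by simp [mulVec_sub, huv]
  have h := mul_abs_le_of_abs_mulVec_le hc.le hoff hrow hF j
  have : |(u - v) j| = 0 := le_antisymm (nonpos_of_mul_nonpos_right h hc) (abs_nonneg _)
  simpa [sub_eq_zero] using this

end MaximumPrinciple

def fracLaplacianMatrix (N : ℕ) (αv bv : Fin (N - 1) → ℝ) :
    Matrix (Fin (N - 1)) (Fin (N - 1)) ℝ :=
  of fun j k => ((1 : ℝ) / N) ^ (-(αv j)) * aWeightR (αv j) ((k : ℤ) - (j : ℤ))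
    + if j = k then bv j else 0

section FracLaplacianMatrix

variable {N : ℕ} {αv bv : Fin (N - 1) → ℝ}

lemma fracLaplacianMatrix_offDiag_nonpos (hα : ∀ j, 0 < αv j ∧ αv j < 2) (j k : Fin (N - 1))
    (hjk : j ≠ k) : fracLaplacianMatrix N αv bv j k ≤ 0 := by
  have hne : (k : ℤ) - (j : ℤ) ≠ 0 :=
    sub_ne_zero.2 fun h => hjk (Fin.ext (by exact_mod_cast h.symm))
  simp only [fracLaplacianMatrix, of_apply, if_neg hjk, add_zero]
  exact mul_nonpos_of_nonneg_of_nonpos (rpow_nonneg (by positivity) _)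
    (aWeightR_lt_zero (hα j).1 (hα j).2 hne).le

lemma le_sum_fracLaplacianMatrix (hα : ∀ j, 0 < αv j ∧ αv j < 2) (hb : ∀ j, 0 ≤ bv j)
    (j : Fin (N - 1)) : (1 - αv j / 2) ^ 3 / 8 ≤ ∑ k, fracLaplacianMatrix N αv bv j k := by
  obtain ⟨hα0, hα2⟩ := hα j
  have hjN : (j : ℝ) + 1 ≤ N := by exact_mod_cast (by omega : (j : ℕ) + 1 ≤ N)
  have hsum : ∑ k, fracLaplacianMatrix N αv bv j k = (N : ℝ) ^ αv j
      * ∑ k ∈ Finset.range (N - 1), aWeightR (αv j) (k - j) + bv j := by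
    simp only [fracLaplacianMatrix, of_apply, Finset.sum_add_distrib, ← Finset.mul_sum,
      one_div_natCast_rpow_neg, Finset.sum_ite_eq, Finset.mem_univ, if_true]
    rw [Fin.sum_univ_eq_sum_range (fun k => aWeightR (αv j) ((k : ℤ) - (j : ℕ)))]
  have hscale : 1 ≤ (N : ℝ) ^ αv j * ((j : ℝ) + 1) ^ (-αv j) := by
    have hN : (0 : ℝ) < N := by linarith
    calc (1 : ℝ) = (N : ℝ) ^ αv j * (N : ℝ) ^ (-αv j) := by
          rw [rpow_neg hN.le, mul_inv_cancel₀ (rpow_pos_of_pos hN _).ne']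
      _ ≤ (N : ℝ) ^ αv j * ((j : ℝ) + 1) ^ (-αv j) :=
          mul_le_mul_of_nonneg_left (rpow_le_rpow_of_nonpos (by positivity) hjN
            (neg_nonpos.2 hα0.le)) (rpow_nonneg hN.le _)
  have hwindow := rpow_mul_le_sum_aWeightR hα0 hα2 j.isLt
  have hL : 0 ≤ (1 - αv j / 2) ^ 3 / 8 := by
    have : 0 < 1 - αv j / 2 := by linarith
    positivity
  rw [hsum]
  calc (1 - αv j / 2) ^ 3 / 8
      ≤ (1 - αv j / 2) ^ 3 / 8 * ((N : ℝ) ^ αv j * ((j : ℝ) + 1) ^ (-αv j)) :=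
        le_mul_of_one_le_right hL hscale
    _ = (N : ℝ) ^ αv j * ((1 - αv j / 2) ^ 3 / 8 * ((j : ℝ) + 1) ^ (-αv j)) := by ring
    _ ≤ (N : ℝ) ^ αv j * ∑ k ∈ Finset.range (N - 1), aWeightR (αv j) (k - j) := by gcongr
    _ ≤ _ := le_add_of_nonneg_right (hb j)

end FracLaplacianMatrix

theorem stmt15_general (αmin αmax : ℝ) (h1 : 0 < αmin) (h3 : αmax < 2) :
    ∃ c : ℝ, 0 < c ∧
      ∀ N : ℕ, 2 ≤ N →
        ∀ αv bv : Fin (N - 1) → ℝ,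
          (∀ j, αmin ≤ αv j ∧ αv j ≤ αmax) → (∀ j, 0 ≤ bv j) →
          ∀ A : Matrix (Fin (N - 1)) (Fin (N - 1)) ℝ,
            (∀ j k, A j k = ((1 : ℝ) / N) ^ (-(αv j)) * aWeightR (αv j) ((k : ℤ) - (j : ℤ))
              + (if j = k then bv j else 0)) →
            IsUnit A ∧
            ∀ f u : Fin (N - 1) → ℝ, A.mulVec u = f →
              ∀ j, |u j| ≤ c * ⨆ k, |f k| := by
  set c₀ : ℝ := (1 - αmax / 2) ^ 3 / 8
  have hc₀ : 0 < c₀ := by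
    have : 0 < 1 - αmax / 2 := by linarith
    positivity
  refine ⟨c₀⁻¹, inv_pos.2 hc₀, fun N _ αv bv hαv hb A hA => ?_⟩
  obtain rfl : A = fracLaplacianMatrix N αv bv := Matrix.ext hA
  have hα : ∀ j, 0 < αv j ∧ αv j < 2 := fun j => ⟨h1.trans_le (hαv j).1, (hαv j).2.trans_lt h3⟩
  have hoff := fracLaplacianMatrix_offDiag_nonpos (bv := bv) hα
  have hrow : ∀ j, c₀ ≤ ∑ k, fracLaplacianMatrix N αv bv j k := fun j => by
    refine le_trans ?_ (le_sum_fracLaplacianMatrix hα hb j)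
    have := (hαv j).2
    exact div_le_div_of_nonneg_right (pow_le_pow_left₀ (by linarith) (by linarith) 3) (by norm_num)
  refine ⟨isUnit_of_offDiag_nonpos_of_rowSum hc₀ hoff hrow, fun f u hu j => ?_⟩
  rw [le_inv_mul_iff₀ hc₀]
  refine mul_abs_le_of_abs_mulVec_le hc₀.le hoff hrow (fun k => ?_) j
  rw [hu]
  exact le_ciSup (f := fun k => |f k|) (Set.finite_range _).bddAbove k

/-- Unique solvability and maximum-norm stability of the finite difference scheme:
the stiffness matrix `A_{jk} = h^{-α_j} a_{k-j}^{(α_j)} + b_j δ_{jk}` (with `h = 1/N`,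
indices `j,k = 1,…,N-1`) is invertible and `‖u‖_∞ ≤ c ‖f‖_∞` whenever `A u = f`,
with `c` depending only on `α_min, α_max`. -/
theorem stmt15 (αmin αmax : ℝ) (h1 : 0 < αmin) (h2 : αmin ≤ αmax) (h3 : αmax < 2) :
    ∃ c : ℝ, 0 < c ∧
      ∀ N : ℕ, 2 ≤ N →
        ∀ αv bv : Fin (N - 1) → ℝ,
          (∀ j, αmin ≤ αv j ∧ αv j ≤ αmax) → (∀ j, 0 ≤ bv j) →
          ∀ A : Matrix (Fin (N - 1)) (Fin (N - 1)) ℝ,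
            (∀ j k, A j k = ((1 : ℝ) / N) ^ (-(αv j)) * aWeightR (αv j) ((k : ℤ) - (j : ℤ))
              + (if j = k then bv j else 0)) →
            IsUnit A ∧
            ∀ f u : Fin (N - 1) → ℝ, A.mulVec u = f →
              ∀ j, |u j| ≤ c * ⨆ k, |f k| :=
  stmt15_general αmin αmax h1 h3
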